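/- Let $a < b$ be extended reals and let $f : (a,b) \to \mathbb{R}$ be continuous on the open interval $(a,b)$. Suppose that for every $x \in (a,b)$ the upper second symmetric derivative satisfies $\overline{D^2 f}(x) := \limsup_{h \to 0^+} \frac{f(x+h) + f(x-h) - 2 f(x)}{h^2} \leq 0$. Then $f$ is concave on $(a,b)$. -/

import Mathlib

open Filter Set

lemma chord_key (p q : ℝ) (hpq : p < q) (f : ℝ → ℝ)
    (hf : ContinuousOn f (Icc p q))
    (hD2 : ∀ m ∈ Ioo p q,
      Filter.limsup
        (fun h : ℝ => (((f (m + h) + f (m - h) - 2 * f m) / h ^ 2 : ℝ) : EReal))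
        (nhdsWithin 0 (Set.Ioi 0)) ≤ (0 : EReal)) :
    ∀ z ∈ Icc p q, f p + (f q - f p) / (q - p) * (z - p) ≤ f z := by
  by_contra hcon
  push_neg at hcon
  obtain ⟨z, hz, hzlt⟩ := hcon
  set L : ℝ → ℝ := fun x => f p + (f q - f p) / (q - p) * (x - p) with hL
  have hqp : (0:ℝ) < q - p := by linarith
  set δ : ℝ := f z - L z with hδ
  have hδneg : δ < 0 := by simpa [hδ] using sub_neg.2 hzlt
  -- choose ε
  set ε : ℝ := (-δ) / (2 * (q - p) ^ 2) with hε
  have hεpos : 0 < ε := div_pos (by linarith) (by positivity)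
  set g : ℝ → ℝ := fun x => f x - L x - ε * (x - p) * (x - q) with hg
  have hgc : ContinuousOn g (Icc p q) := by
    apply ContinuousOn.sub
    apply ContinuousOn.sub hf
    · exact (continuous_const.add (continuous_const.mul (continuous_id.sub continuous_const))).continuousOn
    · exact ((continuous_const.mul (continuous_id.sub continuous_const)).mul (continuous_id.sub continuous_const)).continuousOn
  obtain ⟨m, hm, hmin⟩ := isCompact_Icc.exists_isMinOn (nonempty_Icc.2 hpq.le) hgc
  have hgz : g z < 0 := by
    have h1 : (z - p) * (z - q) ≤ 0 :=
      mul_nonpos_of_nonneg_of_nonpos (by linarith [hz.1]) (by linarith [hz.2])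
    have h2 : -((z - p) * (z - q)) ≤ (q - p)^2 := by nlinarith [hz.1, hz.2]
    have : ε * (-((z - p) * (z - q))) ≤ ε * (q - p)^2 := by
      exact mul_le_mul_of_nonneg_left h2 hεpos.le
    have hεq : ε * (q - p)^2 = -δ / 2 := by
      field_simp [hε]
      rw [hε]; field_simp [hqp.ne']
    simp only [hg]
    nlinarith
  have hgm : g m < 0 := lt_of_le_of_lt (hmin hz) hgz
  have hgp : g p = 0 := by simp [hg, hL]
  have hgq : g q = 0 := by
    simp only [hg, hL]
    field_simp
    ring
  have hmp : p < m := lt_of_le_of_ne hm.1 (by rintro rfl; rw [hgp] at hgm; linarith)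
  have hmq : m < q := lt_of_le_of_ne hm.2 (by rintro h; rw [h, hgq] at hgm; linarith)
  -- eventually quotient ≥ 2ε
  have hev : ∀ᶠ t in nhdsWithin (0:ℝ) (Ioi 0),
      ((2 * ε : ℝ) : EReal) ≤ ((f (m + t) + f (m - t) - 2 * f m) / t ^ 2 : ℝ) := by
    have hmem : Ioo (0:ℝ) (min (m - p) (q - m)) ∈ nhdsWithin (0:ℝ) (Ioi 0) :=
      Ioo_mem_nhdsGT_of_mem ⟨le_refl _, lt_min (by linarith) (by linarith)⟩
    filter_upwards [hmem] with t ht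
    have ht0 : 0 < t := ht.1
    have h1 : m + t ∈ Icc p q := ⟨by linarith, by linarith [lt_of_lt_of_le ht.2 (min_le_right _ _)]⟩
    have h2 : m - t ∈ Icc p q := ⟨by linarith [lt_of_lt_of_le ht.2 (min_le_left _ _)], by linarith⟩
    have k1 : g m ≤ g (m + t) := hmin h1
    have k2 : g m ≤ g (m - t) := hmin h2
    have key : 2 * ε ≤ (f (m + t) + f (m - t) - 2 * f m) / t ^ 2 := by
      rw [le_div_iff₀ (by positivity)]
      simp only [hg, hL] at k1 k2
      nlinarith [k1, k2]
    exact_mod_cast EReal.coe_le_coe_iff.2 key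
  have hlim : ((2 * ε : ℝ) : EReal) ≤
      Filter.limsup
        (fun h : ℝ => (((f (m + h) + f (m - h) - 2 * f m) / h ^ 2 : ℝ) : EReal))
        (nhdsWithin 0 (Set.Ioi 0)) :=
    le_limsup_of_frequently_le' hev.frequently
  have := le_trans hlim (hD2 m ⟨hmp, hmq⟩)
  have : (2 * ε : ℝ) ≤ 0 := by exact_mod_cast this
  linarith


/-- If `f` is continuous on the open interval `(a,b)` (with extended-real
endpoints `a < b`) and its upper second symmetric derivative
`limsup_{h→0⁺} (f(x+h)+f(x-h)-2f(x))/h²` is `≤ 0` at every point of `(a,b)`,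
then `f` is concave on `(a,b)`. -/
theorem upper_second_symmetric_deriv_nonpos_concave
    (a b : EReal) (hab : a < b) (f : ℝ → ℝ)
    (hf : ContinuousOn f {x : ℝ | a < (x : EReal) ∧ (x : EReal) < b})
    (hD2 : ∀ x : ℝ, a < (x : EReal) → (x : EReal) < b →
      Filter.limsup
        (fun h : ℝ => (((f (x + h) + f (x - h) - 2 * f x) / h ^ 2 : ℝ) : EReal))
        (nhdsWithin 0 (Set.Ioi 0)) ≤ (0 : EReal)) :
    ConcaveOn ℝ {x : ℝ | a < (x : EReal) ∧ (x : EReal) < b} f := by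
  set s : Set ℝ := {x : ℝ | a < (x : EReal) ∧ (x : EReal) < b} with hs
  have hOrd : s.OrdConnected := by
    constructor
    intro x hx y hy w hw
    exact ⟨lt_of_lt_of_le hx.1 (EReal.coe_le_coe_iff.2 hw.1),
      lt_of_le_of_lt (EReal.coe_le_coe_iff.2 hw.2) hy.2⟩
  have hconv : Convex ℝ s := hOrd.convex
  apply LinearOrder.concaveOn_of_lt hconv
  intro p hp q hq hpq μ ν hμ hν hμν
  have hsub : Icc p q ⊆ s := hOrd.out hp hq
  have key := chord_key p q hpq f (hf.mono hsub)
    (fun m hm => hD2 m (hsub (Ioo_subset_Icc_self hm)).1 (hsub (Ioo_subset_Icc_self hm)).2)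
  set z : ℝ := μ * p + ν * q with hz
  have hzx : z - p = ν * (q - p) := by rw [hz]; linear_combination p * hμν
  have hzy : q - z = μ * (q - p) := by rw [hz]; linear_combination (-q) * hμν
  have hqp : (0:ℝ) < q - p := by linarith
  have h1 : 0 ≤ ν * (q - p) := by positivity
  have h2 : 0 ≤ μ * (q - p) := by positivity
  have hzI : z ∈ Icc p q := ⟨by linarith, by linarith⟩
  have := key z hzI
  have hchord : f p + (f q - f p) / (q - p) * (z - p) = μ * f p + ν * f q := by
    rw [hzx]
    field_simp
    linear_combination (-f p) * hμν
  simp only [smul_eq_mul]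
  rw [hchord] at this
  exact this
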